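/- Every finite chordal graph with at least one vertex has a simplicial vertex. -/

import Mathlib

/-!
Dirac's argument. If `G` is not complete, pick nonadjacent `a`, `b` and let `S` be the set of
neighbours of `a` adjacent to the component of `b` in `G - N[a]`. Then `S` separates `a` from `b`
and every vertex of `S` has neighbours in both components `A ∋ a` and `B ∋ b` of `G - S`. For
nonadjacent `x, y ∈ S`, shortest `x`–`y` paths through `A` and through `B` would close up to a
chordless cycle of length at least `4`; hence `S` is a clique. By induction, `G[A ∪ S]` has a
simplicial vertex outside the clique `S`, i.e. in `A`, and it stays simplicial in `G` because its
neighbours all lie in `A ∪ S`. The induction runs on the stronger claim that there is a simplicial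
vertex outside any clique that is not the whole vertex set: a clique cannot meet both `A` and `B`,
so one side always avoids it.
-/

def SimpleGraph.IsSimplicialVertex {V : Type*} (G : SimpleGraph V) (v : V) : Prop :=
  G.IsClique (G.neighborSet v)

def SimpleGraph.IsChordal {V : Type*} (G : SimpleGraph V) : Prop :=
  ∀ (v : V) (w : G.Walk v v), w.IsCycle → 4 ≤ w.length →
    ∃ a b, a ∈ w.support ∧ b ∈ w.support ∧ G.Adj a b ∧ s(a, b) ∉ w.edges

def SimpleGraph.IsPEO {V : Type*} [Fintype V] (G : SimpleGraph V)
    (e : Fin (Fintype.card V) ≃ V) : Prop :=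
  ∀ i : Fin (Fintype.card V),
    (G.induce {x | ∃ j, i ≤ j ∧ e j = x}).IsSimplicialVertex ⟨e i, ⟨i, le_refl i, rfl⟩⟩

namespace SimpleGraph

variable {V : Type*} {G : SimpleGraph V}

namespace Walk

variable {x y u v : V}

lemma exists_length_lt_of_adj_start (p : G.Walk x y) (hv : v ∈ p.support) (hxv : G.Adj x v)
    (he : s(x, v) ∉ p.edges) :
    ∃ q : G.Walk x y, q.length < p.length ∧ q.support ⊆ p.support := by
  classical
  cases p with
  | nil => exact absurd (by simpa using hv) hxv.ne'
  | @cons _ c _ hxc r =>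
    have hv' : v ∈ r.support := by simpa [hxv.ne'] using hv
    have hvc : v ≠ c := by rintro rfl; simp at he
    refine ⟨cons hxv (r.dropUntil v hv'), ?_, ?_⟩
    · simpa using length_dropUntil_lt_length hv' hvc
    · exact List.cons_subset_cons _ (r.support_dropUntil_subset_support hv')

lemma exists_length_lt_of_isChord (p : G.Walk x y) (h : p.IsChord s(u, v)) :
    ∃ q : G.Walk x y, q.length < p.length ∧ q.support ⊆ p.support := by
  rw [isChord_sym2Mk] at h
  obtain ⟨huv, he, hu, hv⟩ := h
  induction p with
  | nil => simp_all
  | @cons x c _ hxc r ih =>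
    by_cases hux : u = x
    · subst hux
      exact exists_length_lt_of_adj_start _ hv huv he
    by_cases hvx : v = x
    · subst hvx
      exact exists_length_lt_of_adj_start _ hu huv.symm (by rwa [Sym2.eq_swap])
    obtain ⟨q, hlt, hsub⟩ := ih (fun h => he (by simp [h])) (by simpa [hux] using hu)
      (by simpa [hvx] using hv)
    exact ⟨cons hxc q, by simpa using hlt, List.cons_subset_cons _ hsub⟩

lemma exists_isPath_isChordless {T : Set V} (w : G.Walk x y) (hw : ∀ z ∈ w.support, z ∈ T) :
    ∃ p : G.Walk x y, p.IsPath ∧ p.IsChordless ∧ ∀ z ∈ p.support, z ∈ T := by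
  classical
  have hex : ∃ n, ∃ p : G.Walk x y, (∀ z ∈ p.support, z ∈ T) ∧ p.length = n :=
    ⟨_, w, hw, rfl⟩
  obtain ⟨p, hpT, hplen⟩ := Nat.find_spec hex
  have hmin (q : G.Walk x y) (hqT : ∀ z ∈ q.support, z ∈ T) : p.length ≤ q.length :=
    hplen ▸ Nat.find_min' hex ⟨q, hqT, rfl⟩
  have hbT : ∀ z ∈ p.bypass.support, z ∈ T :=
    fun z hz => hpT z (p.support_bypass_subset_support hz)
  refine ⟨p.bypass, p.bypass_isPath, ?_, hbT⟩
  rintro e hch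
  induction e using Sym2.ind with | _ u v => ?_
  obtain ⟨q, hlt, hsub⟩ := p.bypass.exists_length_lt_of_isChord hch
  have := hmin q fun z hz => hbT z (hsub hz)
  have := p.length_bypass_le_length
  omega

lemma two_le_length_of_not_adj (p : G.Walk x y) (hxy : x ≠ y) (hadj : ¬ G.Adj x y) :
    2 ≤ p.length := by
  by_contra! h
  interval_cases hp : p.length
  · exact hxy (eq_of_length_eq_zero hp)
  · exact hadj (adj_of_length_eq_one hp)

lemma IsPath.start_notMem_support_tail {p : G.Walk x y} (hp : p.IsPath) :
    x ∉ p.support.tail := by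
  have := hp.support_nodup
  rw [← p.cons_tail_support, List.nodup_cons] at this
  exact this.1

lemma IsChordless.append_reverse {p q : G.Walk x y} (hp : p.IsChordless) (hq : q.IsChordless)
    (hpq : ∀ u ∈ p.support, u ∉ q.support → ∀ v ∈ q.support, v ∉ p.support →
      ¬ G.Adj u v) :
    (p.append q.reverse).IsChordless := by
  rw [isChordless_iff_forall_mem_edges]
  intro u v hu hv huv
  simp only [mem_support_append_iff, support_reverse, List.mem_reverse] at hu hv
  simp only [edges_append, edges_reverse, List.mem_append, List.mem_reverse]
  by_cases hpuv : u ∈ p.support ∧ v ∈ p.support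
  · exact Or.inl (hp.mem_edges hpuv.1 hpuv.2 huv)
  by_cases hquv : u ∈ q.support ∧ v ∈ q.support
  · exact Or.inr (hq.mem_edges hquv.1 hquv.2 huv)
  exfalso
  rcases hu with hup | huq
  · have hvq : v ∈ q.support := hv.resolve_left fun hvp => hpuv ⟨hup, hvp⟩
    exact hpq u hup (fun huq => hquv ⟨huq, hvq⟩) v hvq (fun hvp => hpuv ⟨hup, hvp⟩) huv
  · have hvp : v ∈ p.support := hv.resolve_right fun hvq => hquv ⟨huq, hvq⟩
    exact hpq v hvp (fun hvq => hquv ⟨huq, hvq⟩) u huq (fun hup => hpuv ⟨hup, hvp⟩) huv.symm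

end Walk

theorem IsChordal.adj_of_separated_walks (hG : G.IsChordal) {A B : Set V} (hAB : Disjoint A B)
    (hnadj : ∀ u ∈ A, ∀ v ∈ B, ¬ G.Adj u v) {x y : V} (hxy : x ≠ y) (p q : G.Walk x y)
    (hp : ∀ z ∈ p.support, z ∈ insert x (insert y A))
    (hq : ∀ z ∈ q.support, z ∈ insert x (insert y B)) : G.Adj x y := by
  by_contra hxy'
  obtain ⟨p, hpath, hpc, hpA⟩ := p.exists_isPath_isChordless hp
  obtain ⟨q, hqpath, hqc, hqB⟩ := q.exists_isPath_isChordless hq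
  have hcross : ∀ u ∈ p.support, u ∉ q.support → ∀ v ∈ q.support, v ∉ p.support →
      ¬ G.Adj u v := by
    intro u hup huq v hvq hvp
    have hux : u ≠ x := by rintro rfl; exact huq q.start_mem_support
    have huy : u ≠ y := by rintro rfl; exact huq q.end_mem_support
    have hvx : v ≠ x := by rintro rfl; exact hvp p.start_mem_support
    have hvy : v ≠ y := by rintro rfl; exact hvp p.end_mem_support
    exact hnadj u (by simpa [hux, huy] using hpA u hup) v (by simpa [hvx, hvy] using hqB v hvq)
  have hdisj : p.support.tail.Disjoint q.reverse.support.tail := by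
    intro z hzp hzq
    have hzq' : z ∈ q.support := by simpa using List.mem_of_mem_tail hzq
    rcases hpA z (List.mem_of_mem_tail hzp) with rfl | rfl | hzA
    · exact hpath.start_notMem_support_tail hzp
    · exact hqpath.reverse.start_notMem_support_tail hzq
    rcases hqB z hzq' with rfl | rfl | hzB
    · exact hpath.start_notMem_support_tail hzp
    · exact hqpath.reverse.start_notMem_support_tail hzq
    · exact hAB.notMem_of_mem_left hzA hzB
  have hp2 := p.two_le_length_of_not_adj hxy hxy'
  have hq2 := q.two_le_length_of_not_adj hxy hxy'
  have hcyc := hpath.isCycle_append hqpath.reverse hdisj (Or.inl hp2)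
  have hlen : 4 ≤ (p.append q.reverse).length := by
    simp only [Walk.length_append, Walk.length_reverse]
    omega
  obtain ⟨u, v, hu, hv, huv, hch⟩ := hG x _ hcyc hlen
  exact hpc.append_reverse hqc hcross (Walk.isChord_sym2Mk.2 ⟨huv, hch, hu, hv⟩)

def ReachableAvoiding (G : SimpleGraph V) (S : Set V) (u v : V) : Prop :=
  ∃ w : G.Walk u v, ∀ z ∈ w.support, z ∉ S

namespace ReachableAvoiding

variable {S T : Set V} {u v w : V}

lemma notMem_right (h : G.ReachableAvoiding S u v) : v ∉ S :=
  h.elim fun p hp => hp v p.end_mem_support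

lemma refl (hu : u ∉ S) : G.ReachableAvoiding S u u :=
  ⟨.nil, by simpa using hu⟩

lemma symm (h : G.ReachableAvoiding S u v) : G.ReachableAvoiding S v u :=
  h.elim fun p hp => ⟨p.reverse, by simpa using hp⟩

lemma trans (huv : G.ReachableAvoiding S u v) (hvw : G.ReachableAvoiding S v w) :
    G.ReachableAvoiding S u w := by
  obtain ⟨p, hp⟩ := huv
  obtain ⟨q, hq⟩ := hvw
  refine ⟨p.append q, fun z hz => ?_⟩
  rcases (Walk.mem_support_append_iff p q).mp hz with hz | hz
  exacts [hp z hz, hq z hz]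

lemma concat (h : G.ReachableAvoiding S u v) (hw : w ∉ S) (hvw : G.Adj v w) :
    G.ReachableAvoiding S u w :=
  h.trans ⟨hvw.toWalk, by simpa using ⟨h.notMem_right, hw⟩⟩

lemma mono (hTS : T ⊆ S) (h : G.ReachableAvoiding S u v) : G.ReachableAvoiding T u v :=
  h.elim fun p hp => ⟨p, fun z hz hzT => hp z hz (hTS hzT)⟩

lemma of_mem_support {p : G.Walk u v} (hp : ∀ z ∈ p.support, z ∉ S) (hw : w ∈ p.support) :
    G.ReachableAvoiding S u w := by
  classical
  exact ⟨p.takeUntil w hw, fun z hz => hp z (p.support_takeUntil_subset_support hw hz)⟩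

end ReachableAvoiding

theorem IsChordal.isClique_of_separates (hG : G.IsChordal) {S : Set V} {a b : V}
    (hsep : ¬ G.ReachableAvoiding S a b)
    (hS : ∀ x ∈ S, (∃ u, G.Adj x u ∧ G.ReachableAvoiding S a u) ∧
      ∃ u, G.Adj x u ∧ G.ReachableAvoiding S b u) :
    G.IsClique S := by
  have hwalk (c x y : V) (hx : ∃ u, G.Adj x u ∧ G.ReachableAvoiding S c u)
      (hy : ∃ u, G.Adj y u ∧ G.ReachableAvoiding S c u) :
      ∃ w : G.Walk x y,
        ∀ z ∈ w.support, z ∈ insert x (insert y {z | G.ReachableAvoiding S c z}) := by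
    obtain ⟨u, hxu, hu⟩ := hx
    obtain ⟨v, hyv, hv⟩ := hy
    obtain ⟨w, hw⟩ := hu.symm.trans hv
    refine ⟨.cons hxu (w.concat hyv.symm), fun z hz => ?_⟩
    simp only [Walk.support_cons, Walk.support_concat, List.mem_cons, List.mem_append,
      List.not_mem_nil, or_false] at hz
    rcases hz with rfl | hz | rfl
    · exact Set.mem_insert _ _
    · exact Or.inr (Or.inr (hu.trans (.of_mem_support hw hz)))
    · exact Or.inr (Set.mem_insert _ _)
  intro x hx y hy hxy
  obtain ⟨p, hp⟩ := hwalk a x y (hS x hx).1 (hS y hy).1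
  obtain ⟨q, hq⟩ := hwalk b x y (hS x hx).2 (hS y hy).2
  refine hG.adj_of_separated_walks ?_ ?_ hxy p q hp hq
  · exact Set.disjoint_left.2 fun z hza hzb => hsep (hza.trans hzb.symm)
  · exact fun u hu v hv huv => hsep ((hu.concat hv.notMem_right huv).trans hv.symm)

theorem IsChordal.exists_isClique_separator (hG : G.IsChordal) {a b : V} (hab : a ≠ b)
    (hadj : ¬ G.Adj a b) :
    ∃ S : Set V, G.IsClique S ∧ a ∉ S ∧ b ∉ S ∧ ¬ G.ReachableAvoiding S a b := by
  set N := insert a (G.neighborSet a)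
  set B := {v | G.ReachableAvoiding N b v}
  set S := {x | G.Adj a x ∧ ∃ y ∈ B, G.Adj x y}
  have hsep : ¬ G.ReachableAvoiding S a b := by
    rintro ⟨w, hw⟩
    have hb : b ∈ B := .refl (by simp [N, hab.symm, hadj])
    have ha : a ∉ B := fun h => h.notMem_right (Set.mem_insert a _)
    obtain ⟨d, hd, hd₁, hd₂⟩ := w.reverse.exists_boundary_dart B hb ha
    have hdS : d.snd ∉ S := hw _ (by simpa using w.reverse.dart_snd_mem_support_of_mem_darts hd)
    by_cases hdN : d.snd ∈ N
    · rcases hdN with h | h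
      · exact hd₁.notMem_right (Or.inr (h ▸ d.adj.symm))
      · exact hdS ⟨h, d.fst, hd₁, d.adj.symm⟩
    · exact hd₂ (hd₁.concat hdN d.adj)
  refine ⟨S, hG.isClique_of_separates hsep fun x hx => ⟨?_, ?_⟩, fun h => G.irrefl h.1,
    fun h => hadj h.1, hsep⟩
  · exact ⟨a, hx.1.symm, .refl fun h => G.irrefl h.1⟩
  · obtain ⟨y, hy, hxy⟩ := hx.2
    exact ⟨y, hxy, hy.mono fun z hz => Or.inr hz.1⟩

theorem IsChordal.of_embedding {W : Type*} {H : SimpleGraph W} (f : H ↪g G) (hG : G.IsChordal) :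
    H.IsChordal := by
  intro v w hcyc hlen
  obtain ⟨a, b, ha, hb, hadj, hne⟩ := hG (f v) (w.map f.toHom)
    ((Walk.isCycle_map_iff_of_injective f.injective).mpr hcyc) (by rwa [Walk.length_map])
  rw [Walk.support_map, List.mem_map] at ha hb
  obtain ⟨a, ha, rfl⟩ := ha
  obtain ⟨b, hb, rfl⟩ := hb
  refine ⟨a, b, ha, hb, f.map_adj_iff.mp hadj, fun h => hne ?_⟩
  rw [Walk.edges_map]
  exact List.mem_map.mpr ⟨s(a, b), h, Sym2.map_mk f _ _⟩

theorem IsSimplicialVertex.of_induce {s : Set V} {u : s} (hN : G.neighborSet u ⊆ s)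
    (hu : (G.induce s).IsSimplicialVertex u) : G.IsSimplicialVertex u :=
  fun v hv w hw hvw =>
    hu (show (G.induce s).Adj u ⟨v, hN hv⟩ from hv)
      (show (G.induce s).Adj u ⟨w, hN hw⟩ from hw) fun h => hvw (congrArg Subtype.val h)

theorem IsChordal.exists_isSimplicialVertex_notMem [Finite V] (hG : G.IsChordal) {K : Set V}
    (hK : G.IsClique K) {v₀ : V} (hv₀ : v₀ ∉ K) : ∃ v ∉ K, G.IsSimplicialVertex v := by
  induction hn : Nat.card V using Nat.strong_induction_on generalizing V with | _ n ih => ?_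
  by_cases hcomplete : ∀ u w : V, u ≠ w → G.Adj u w
  · exact ⟨v₀, hv₀, fun x _ y _ hxy => hcomplete x y hxy⟩
  push Not at hcomplete
  obtain ⟨a, b, hab, hadj⟩ := hcomplete
  obtain ⟨S, hS, haS, hbS, hsep⟩ := hG.exists_isClique_separator hab hadj
  have hside (x y : V) (hxS : x ∉ S) (hyS : y ∉ S) (hxy : ¬ G.ReachableAvoiding S x y) :
      ∃ u, G.ReachableAvoiding S x u ∧ G.IsSimplicialVertex u := by
    set t := {v | G.ReachableAvoiding S x v} ∪ S
    have hyt : y ∉ t := by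
      rintro (h | h)
      exacts [hxy h, hyS h]
    obtain ⟨u, huS, hu⟩ := ih _ (hn ▸ Finite.card_subtype_lt hyt)
      (hG.of_embedding (Embedding.induce t))
      (K := Subtype.val ⁻¹' S)
      (isClique_induce_iff.2 (hS.subset (Set.image_preimage_subset _ _)))
      (v₀ := ⟨x, Or.inl (.refl hxS)⟩) hxS rfl
    have hxu : G.ReachableAvoiding S x u := u.2.resolve_right huS
    refine ⟨u, hxu, hu.of_induce fun v huv => ?_⟩
    by_cases hv : v ∈ S
    exacts [Or.inr hv, Or.inl (hxu.concat hv huv)]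
  have hK : (∀ k ∈ K, ¬ G.ReachableAvoiding S a k) ∨
      ∀ k ∈ K, ¬ G.ReachableAvoiding S b k := by
    by_contra! h
    obtain ⟨⟨k, hk, hak⟩, l, hl, hbl⟩ := h
    apply hsep
    rcases eq_or_ne k l with rfl | hkl
    · exact hak.trans hbl.symm
    · exact (hak.concat hbl.notMem_right (hK hk hl hkl)).trans hbl.symm
  rcases hK with hKa | hKb
  · obtain ⟨u, hau, hu⟩ := hside a b haS hbS hsep
    exact ⟨u, fun huK => hKa u huK hau, hu⟩
  · obtain ⟨u, hbu, hu⟩ := hside b a hbS haS fun h => hsep h.symm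
    exact ⟨u, fun huK => hKb u huK hbu, hu⟩

end SimpleGraph

theorem chordal_exists_simplicial {V : Type*} [Fintype V] [Nonempty V] (G : SimpleGraph V)
    (hG : G.IsChordal) :
    ∃ v : V, G.IsSimplicialVertex v := by
  obtain ⟨v, -, hv⟩ := hG.exists_isSimplicialVertex_notMem SimpleGraph.isClique_empty
    (Set.notMem_empty (Classical.arbitrary V))
  exact ⟨v, hv⟩
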